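/- Let A be a row circular binary matrix satisfying the standard assumptions. If the joint saturation graph of two distinct vertices v and v' of Q*(A) has no edges, then v and v' are not adjacent in Q*(A). -/

import Mathlib

open Finset

/-- Support of a vector. -/
def supp {n : ℕ} (x : Fin n → ℝ) : Set (Fin n) := {j | x j ≠ 0}

/-- Support of the `t`-th row of a matrix. -/
def rowSupp {m n : ℕ} (A : Matrix (Fin m) (Fin n) ℝ) (t : Fin m) : Set (Fin n) :=
  {j | A t j ≠ 0}

def IsBinaryMatrix {m n : ℕ} (A : Matrix (Fin m) (Fin n) ℝ) : Prop :=
  ∀ t j, A t j = 0 ∨ A t j = 1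

def IsBinaryVec {n : ℕ} (x : Fin n → ℝ) : Prop := ∀ j, x j = 0 ∨ x j = 1

/-- The polyhedron `{x | A x ≥ b, x ≥ 0}`. -/
def polyP {m n : ℕ} (A : Matrix (Fin m) (Fin n) ℝ) (b : Fin m → ℝ) : Set (Fin n → ℝ) :=
  {x | (∀ i, b i ≤ ∑ j, A i j * x j) ∧ ∀ j, 0 ≤ x j}

/-- The linear relaxation `Q(A) = {x | A x ≥ 1, x ≥ 0}`. -/
def polyQ {m n : ℕ} (A : Matrix (Fin m) (Fin n) ℝ) : Set (Fin n → ℝ) :=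
  {x | (∀ i, 1 ≤ ∑ j, A i j * x j) ∧ ∀ j, 0 ≤ x j}

/-- The set covering polyhedron `Q*(A)`: convex hull of nonnegative integer solutions of
`A x ≥ 1`. -/
def Qstar {m n : ℕ} (A : Matrix (Fin m) (Fin n) ℝ) : Set (Fin n → ℝ) :=
  convexHull ℝ {x | (∀ j, ∃ k : ℕ, x j = k) ∧ ∀ i, 1 ≤ ∑ j, A i j * x j}

/-- A vertex of a convex set is an extreme point. -/
def IsVertex {n : ℕ} (S : Set (Fin n → ℝ)) (v : Fin n → ℝ) : Prop :=
  v ∈ S.extremePoints ℝ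

/-- Two distinct vertices are adjacent when they lie on a common edge, i.e. the segment
joining them is a face (extreme subset) of `S`. -/
def AdjacentVerts {n : ℕ} (S : Set (Fin n → ℝ)) (v w : Fin n → ℝ) : Prop :=
  v ≠ w ∧ IsVertex S v ∧ IsVertex S w ∧ IsExtreme ℝ S (segment ℝ v w)

/-- There is a row support `C` with `C ∩ supp v = {p}` and `C ∩ supp v' = {p'}`. -/
def jsgEdge {m n : ℕ} (A : Matrix (Fin m) (Fin n) ℝ) (v v' : Fin n → ℝ)
    (p p' : Fin n) : Prop :=
  ∃ t, rowSupp A t ∩ supp v = {p} ∧ rowSupp A t ∩ supp v' = {p'}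

/-- The joint saturation graph of `v` and `v'` with respect to `A`. -/
def JSG {m n : ℕ} (A : Matrix (Fin m) (Fin n) ℝ) (v v' : Fin n → ℝ) :
    SimpleGraph (Fin n) where
  Adj p p' := p ≠ p' ∧ (jsgEdge A v v' p p' ∨ jsgEdge A v v' p' p)
  symm := ⟨by intro p p' h; exact ⟨h.1.symm, h.2.symm⟩⟩
  loopless := ⟨by intro p h; exact h.1 rfl⟩

/-- The node set of the joint saturation graph: the symmetric difference of the supports. -/
def jsgNodes {n : ℕ} (v v' : Fin n → ℝ) : Set (Fin n) :=
  (supp v \ supp v') ∪ (supp v' \ supp v)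

def JSGConnected {m n : ℕ} (A : Matrix (Fin m) (Fin n) ℝ) (v v' : Fin n → ℝ) : Prop :=
  ∀ p ∈ jsgNodes v v', ∀ q ∈ jsgNodes v v', (JSG A v v').Reachable p q

/-- One of the two partite sets is contained in a single connected component. -/
def JSGPartiteConnected {m n : ℕ} (A : Matrix (Fin m) (Fin n) ℝ) (v v' : Fin n → ℝ) : Prop :=
  (∀ p ∈ supp v \ supp v', ∀ q ∈ supp v \ supp v', (JSG A v v').Reachable p q) ∨
  (∀ p ∈ supp v' \ supp v, ∀ q ∈ supp v' \ supp v, (JSG A v v').Reachable p q)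

/-- Exactly two components, one of which is an isolated node. -/
def JSGAlmostConnected {m n : ℕ} (A : Matrix (Fin m) (Fin n) ℝ) (v v' : Fin n → ℝ) : Prop :=
  ∃ q ∈ jsgNodes v v', (∀ p, ¬ (JSG A v v').Adj q p) ∧ (jsgNodes v v' \ {q}).Nonempty ∧
    ∀ p ∈ jsgNodes v v' \ {q}, ∀ r ∈ jsgNodes v v' \ {q}, (JSG A v v').Reachable p r

/-- The (directed) circular arc from `i` to `j` in `Fin n`. -/
def arc {n : ℕ} [NeZero n] (i j : Fin n) : Set (Fin n) :=
  {k | ∃ h : ℕ, h ≤ ((j - i : Fin n) : ℕ) ∧ k = i + (Fin.ofNat n h : Fin n)}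

/-- A matrix is row circular if each row support is a circular arc. -/
def RowCircular {m n : ℕ} [NeZero n] (A : Matrix (Fin m) (Fin n) ℝ) : Prop :=
  ∀ t, ∃ i j : Fin n, rowSupp A t = arc i j

/-- The standard assumptions: binary, no dominating rows, between 2 and n-1 ones per row,
no all-zero or all-one column. -/
def StandardAssumptions {m n : ℕ} (A : Matrix (Fin m) (Fin n) ℝ) : Prop :=
  IsBinaryMatrix A ∧
  (∀ s t : Fin m, s ≠ t → ¬ rowSupp A s ⊆ rowSupp A t) ∧
  (∀ t, 2 ≤ (rowSupp A t).ncard ∧ (rowSupp A t).ncard ≤ n - 1) ∧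
  (∀ j : Fin n, (∃ t, A t j ≠ 0) ∧ (∃ t, A t j = 0))

/-- `a` and `b` occur consecutively (in either order) in the list `l`. -/
def ListConsec {α : Type*} (l : List α) (a b : α) : Prop :=
  ∃ k : ℕ, (l[k]? = some a ∧ l[k+1]? = some b) ∨ (l[k]? = some b ∧ l[k+1]? = some a)

/-- `a` and `b` occur cyclically consecutively (in either order) in the list `l`. -/
def CycConsec {α : Type*} (l : List α) (a b : α) : Prop :=
  ∃ k : ℕ, k < l.length ∧
    ((l[k]? = some a ∧ l[(k+1) % l.length]? = some b) ∨
     (l[k]? = some b ∧ l[(k+1) % l.length]? = some a))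

/-- The set `S` induces a path (possibly a single node) in `G`. -/
def IsPathOn {n : ℕ} (G : SimpleGraph (Fin n)) (S : Set (Fin n)) : Prop :=
  ∃ l : List (Fin n), l.Nodup ∧ (∀ x, x ∈ S ↔ x ∈ l) ∧
    (∀ a b, a ∈ S → G.Adj a b → ListConsec l a b) ∧
    (∀ a b, ListConsec l a b → G.Adj a b)

/-- The set `S` induces a cycle in `G`. -/
def IsCycleOn {n : ℕ} (G : SimpleGraph (Fin n)) (S : Set (Fin n)) : Prop :=
  ∃ l : List (Fin n), 3 ≤ l.length ∧ l.Nodup ∧ (∀ x, x ∈ S ↔ x ∈ l) ∧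
    (∀ a b, a ∈ S → G.Adj a b → CycConsec l a b) ∧
    (∀ a b, CycConsec l a b → G.Adj a b)

/-- `p` and `q` are cyclically consecutive elements of `S`. -/
def CyclConsecIn {n : ℕ} [NeZero n] (S : Set (Fin n)) (p q : Fin n) : Prop :=
  p ≠ q ∧ p ∈ S ∧ q ∈ S ∧ (arc p q ∩ S = {p, q} ∨ arc q p ∩ S = {p, q})

/-- The circulant matrix `C(n,2)` with row supports `{t, t+1}` (mod n). -/
def Cn2 (n : ℕ) [NeZero n] : Matrix (Fin n) (Fin n) ℝ :=
  fun t j => if j = t ∨ j = t + 1 then 1 else 0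

/-- Append a row to a matrix. -/
def appendRow {m n : ℕ} (A : Matrix (Fin m) (Fin n) ℝ) (a : Fin n → ℝ) :
    Matrix (Fin (m+1)) (Fin n) ℝ :=
  fun t j => if h : (t : ℕ) < m then A ⟨t, h⟩ j else a j

/-- A set of points is integral if all its extreme points are integer vectors. -/
def IsIntegralSet {n : ℕ} (S : Set (Fin n → ℝ)) : Prop :=
  ∀ x ∈ S.extremePoints ℝ, ∀ j, ∃ z : ℤ, x j = z

/-- A binary matrix is minimally nonideal if `Q(A)` is not integral but both restrictions
`Q(A) ∩ {x_i = 0}` and `Q(A) ∩ {x_i = 1}` are integral for every coordinate `i`. -/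
def MinimallyNonideal {m n : ℕ} (A : Matrix (Fin m) (Fin n) ℝ) : Prop :=
  ¬ IsIntegralSet (polyQ A) ∧
  ∀ i : Fin n, IsIntegralSet (polyQ A ∩ {x | x i = 0}) ∧
               IsIntegralSet (polyQ A ∩ {x | x i = 1})

/-- The matrix of the degenerate projective plane with `t+1` points and lines. -/
def Jmat (t : ℕ) : Matrix (Fin (t+1)) (Fin (t+1)) ℝ :=
  fun i j => if i = 0 then (if j = 0 then 0 else 1) else (if j = 0 ∨ j = i then 1 else 0)

/-- `A` is isomorphic to some degenerate projective plane matrix `J_t`, `t ≥ 2`. -/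
def IsoToDegenProjPlane {m n : ℕ} (A : Matrix (Fin m) (Fin n) ℝ) : Prop :=
  ∃ t : ℕ, 2 ≤ t ∧ ∃ (σ : Fin m ≃ Fin (t+1)) (τ : Fin n ≃ Fin (t+1)),
    ∀ i j, A i j = Jmat t (σ i) (τ j)

/-- `A₁` is the core of `A`: a square nonsingular row submatrix with `r` ones per row and
per column, all other rows of `A` having more than `r` ones. -/
def IsCore {m n : ℕ} (A : Matrix (Fin m) (Fin n) ℝ) (A₁ : Matrix (Fin n) (Fin n) ℝ)
    (r : ℕ) : Prop :=
  2 ≤ r ∧ A₁.det ≠ 0 ∧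
  (∃ f : Fin n → Fin m, Function.Injective f ∧ (∀ i, A₁ i = A (f i)) ∧
    ∀ t, t ∉ Set.range f → r < (rowSupp A t).ncard) ∧
  (∀ i, (rowSupp A₁ i).ncard = r) ∧ (∀ j, {i | A₁ i j ≠ 0}.ncard = r)

/-- `B₁` is the core of the blocker of `A`: a square nonsingular matrix whose rows are
binary vertices of `Q*(A)` with `s` ones per row and per column, all other binary
vertices of `Q*(A)` having more than `s` ones. -/
def IsBlockerCore {m n : ℕ} (A : Matrix (Fin m) (Fin n) ℝ) (B₁ : Matrix (Fin n) (Fin n) ℝ)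
    (s : ℕ) : Prop :=
  2 ≤ s ∧ B₁.det ≠ 0 ∧
  (∀ i, IsBinaryVec (B₁ i) ∧ IsVertex (Qstar A) (B₁ i)) ∧
  Function.Injective (fun i => B₁ i) ∧
  (∀ i, (rowSupp B₁ i).ncard = s) ∧ (∀ j, {i | B₁ i j ≠ 0}.ncard = s) ∧
  (∀ x, IsBinaryVec x → IsVertex (Qstar A) x → (∀ i, x ≠ B₁ i) → s < (supp x).ncard)

/-- `w^i` for `n = 3ν`: the complement of the characteristic vector of the residue class
`i` mod 3. -/
def wVec (n : ℕ) (i : Fin 3) : Fin n → ℝ :=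
  fun k => if (k : ℕ) % 3 = (i : ℕ) then 0 else 1

/-- `a^i` for `n = 3ν`: the characteristic vector of the residue class `i` mod 3
(`a¹ = (1,0,0,1,0,0,…)` corresponds to `i = 0`). -/
def aVec (n : ℕ) (i : ℕ) : Fin n → ℝ :=
  fun k => if (k : ℕ) % 3 = i then 1 else 0

/-!
Vertices of `Q*(A)` are `0/1` vectors. If `[v, v']` were an edge, every pair of integer covers
`x, y` with `x + y = v + v'` would lie on it and hence, being integral, be `v` and `v'`. Take
`x = max v v'` on a set `T` and `min v v'` off it, and `y` the other way round. A row meeting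
`supp v ∩ supp v'` is covered by both. Any other row meets the symmetric difference `D` of the
supports in at least three points (otherwise it gives an edge of the joint saturation graph), and
these form an arc of `D` in its cyclic order since `A` is row circular. So it suffices that `T`
meets and misses every such arc and that `x ∉ {v, v'}`; a parity coloring of the ranks in `D`,
possibly with ranks `0` and `1` swapped, does both.
-/

section IntegerCovers

variable {m n : ℕ} {A : Matrix (Fin m) (Fin n) ℝ}

def integerCovers (A : Matrix (Fin m) (Fin n) ℝ) : Set (Fin n → ℝ) :=
  {x | (∀ j, ∃ k : ℕ, x j = k) ∧ ∀ i, 1 ≤ ∑ j, A i j * x j}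

lemma integerCovers_subset_Qstar : integerCovers A ⊆ Qstar A := subset_convexHull ℝ _

lemma IsVertex.mem_integerCovers {v : Fin n → ℝ} (hv : IsVertex (Qstar A) v) :
    v ∈ integerCovers A :=
  extremePoints_convexHull_subset hv

lemma IsBinaryMatrix.nonneg (hA : IsBinaryMatrix A) (t : Fin m) (j : Fin n) : 0 ≤ A t j := by
  rcases hA t j with h | h <;> simp [h]

lemma nonneg_of_forall_eq_natCast {x : Fin n → ℝ} (hx : ∀ j, ∃ k : ℕ, x j = k) (j : Fin n) :
    0 ≤ x j := by
  obtain ⟨k, hk⟩ := hx j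
  exact hk ▸ k.cast_nonneg

lemma mem_integerCovers_of_le (hA : ∀ t j, 0 ≤ A t j) {x y : Fin n → ℝ}
    (hx : x ∈ integerCovers A) (hxy : x ≤ y) (hy : ∀ j, ∃ k : ℕ, y j = k) :
    y ∈ integerCovers A :=
  ⟨hy, fun t => (hx.2 t).trans <|
    sum_le_sum fun j _ => mul_le_mul_of_nonneg_left (hxy j) (hA t j)⟩

/-- A vertex `v` is the midpoint of any smaller cover `w` and of `2v - w`, again a cover. -/
lemma IsVertex.eq_of_le (hA : ∀ t j, 0 ≤ A t j) {v w : Fin n → ℝ} (hv : IsVertex (Qstar A) v)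
    (hw : w ∈ integerCovers A) (hwv : w ≤ v) : w = v := by
  have hvI := hv.mem_integerCovers
  have hu : (2 : ℝ) • v - w ∈ integerCovers A := by
    refine mem_integerCovers_of_le hA hvI (fun j => ?_) fun j => ?_
    · simp only [Pi.sub_apply, Pi.smul_apply, smul_eq_mul]
      linarith [hwv j]
    · obtain ⟨a, ha⟩ := hvI.1 j
      obtain ⟨b, hb⟩ := hw.1 j
      have hba : b ≤ a := by
        have := hwv j
        rw [ha, hb] at this
        exact Nat.cast_le.mp this
      refine ⟨2 * a - b, ?_⟩
      simp only [Pi.sub_apply, Pi.smul_apply, smul_eq_mul, ha, hb]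
      push_cast [Nat.cast_sub (by omega : b ≤ 2 * a)]
      ring
  refine hv.2 (integerCovers_subset_Qstar hw) (integerCovers_subset_Qstar hu)
    ⟨1 / 2, 1 / 2, by norm_num, by norm_num, by norm_num, ?_⟩
  ext j
  simp only [Pi.add_apply, Pi.sub_apply, Pi.smul_apply, smul_eq_mul]
  ring

lemma mem_integerCovers_iff (hA : IsBinaryMatrix A) {x : Fin n → ℝ}
    (hx : ∀ j, ∃ k : ℕ, x j = k) :
    x ∈ integerCovers A ↔ ∀ t, (rowSupp A t ∩ supp x).Nonempty := by
  refine ⟨fun h t => ?_, fun h => ⟨hx, fun t => ?_⟩⟩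
  · obtain ⟨j, -, hj⟩ := exists_ne_zero_of_sum_ne_zero (one_pos.trans_le (h.2 t)).ne'
    exact ⟨j, mul_ne_zero_iff.mp hj⟩
  · obtain ⟨j, hAj, hxj : x j ≠ 0⟩ := h t
    obtain ⟨k, hk⟩ := hx j
    have hxj1 : 1 ≤ x j := by
      rw [hk] at hxj ⊢
      exact_mod_cast Nat.one_le_iff_ne_zero.2 (by exact_mod_cast hxj)
    calc (1 : ℝ) ≤ A t j * x j := by rw [(hA t j).resolve_left hAj, one_mul]; exact hxj1
      _ ≤ ∑ l, A t l * x l := single_le_sum (fun l _ =>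
          mul_nonneg (hA.nonneg t l) (nonneg_of_forall_eq_natCast hx l)) (mem_univ j)

/-- Truncating a vertex at `1` keeps its support, hence it stays a cover below the vertex. -/
lemma IsVertex.isBinaryVec (hA : IsBinaryMatrix A) {v : Fin n → ℝ}
    (hv : IsVertex (Qstar A) v) : IsBinaryVec v := by
  have hvI := hv.mem_integerCovers
  have hnat : ∀ j, ∃ k : ℕ, min (v j) 1 = k := fun j => by
    obtain ⟨k, hk⟩ := hvI.1 j
    exact ⟨min k 1, by simp [hk]⟩
  have hsupp : supp (fun j => min (v j) 1) = supp v := by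
    ext j
    have hj := nonneg_of_forall_eq_natCast hvI.1 j
    refine ⟨fun h h0 => h (by simp [h0]), fun h => ?_⟩
    exact (lt_min (hj.lt_of_ne (Ne.symm h)) one_pos).ne'
  have htrunc := hv.eq_of_le hA.nonneg
    ((mem_integerCovers_iff hA hnat).2 (hsupp ▸ (mem_integerCovers_iff hA hvI.1).1 hvI))
    fun j => min_le_left _ _
  intro j
  obtain ⟨k, hk⟩ := hvI.1 j
  have hle : v j ≤ 1 := congrFun htrunc j ▸ min_le_right (v j) 1
  have hk1 : k ≤ 1 := by exact_mod_cast hk ▸ hle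
  interval_cases k <;> simp [hk]

lemma IsVertex.exists_eq_one_eq_zero (hA : IsBinaryMatrix A) {v v' : Fin n → ℝ}
    (hv : IsVertex (Qstar A) v) (hv' : IsVertex (Qstar A) v') (hne : v ≠ v') :
    ∃ j, v j = 1 ∧ v' j = 0 := by
  by_contra! h
  refine hne (hv'.eq_of_le hA.nonneg hv.mem_integerCovers fun j => ?_)
  rcases hv.isBinaryVec hA j with h0 | h1
  · exact h0 ▸ nonneg_of_forall_eq_natCast hv'.mem_integerCovers.1 j
  · rw [h1, ((hv'.isBinaryVec hA j).resolve_left (h j h1))]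

end IntegerCovers

lemma IsExtreme.mem_of_add_eq {E : Type*} [AddCommGroup E] [Module ℝ E] {S : Set E}
    {v v' x y : E} (h : IsExtreme ℝ S (segment ℝ v v')) (hx : x ∈ S) (hy : y ∈ S)
    (hxy : x + y = v + v') : x ∈ segment ℝ v v' :=
  h.left_mem_of_mem_openSegment hx hy (z := (1 / 2 : ℝ) • v + (1 / 2 : ℝ) • v')
    ⟨1 / 2, 1 / 2, by norm_num, by norm_num, by norm_num, rfl⟩
    ⟨1 / 2, 1 / 2, by norm_num, by norm_num, by norm_num, by rw [← smul_add, hxy, smul_add]⟩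

lemma eq_or_eq_of_mem_segment {ι : Type*} {v v' x : ι → ℝ} (hx : x ∈ segment ℝ v v') {j : ι}
    (hj : v j ≠ v' j) (hxj : x j = v j ∨ x j = v' j) : x = v ∨ x = v' := by
  obtain ⟨a, b, -, -, hab, rfl⟩ := hx
  obtain rfl : a = 1 - b := by linarith
  simp only [Pi.add_apply, Pi.smul_apply, smul_eq_mul] at hxj
  have hd : v' j - v j ≠ 0 := sub_ne_zero.2 hj.symm
  rcases hxj with h | h
  · obtain rfl : b = 0 := by
      have : b * (v' j - v j) = 0 := by linarith
      exact (mul_eq_zero.1 this).resolve_right hd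
    left; simp
  · obtain rfl : b = 1 := by
      have : (b - 1) * (v' j - v j) = 0 := by linarith
      linarith [(mul_eq_zero.1 this).resolve_right hd]
    right; simp

section Rank

variable {α : Type*} [LinearOrder α]

def rankIn (s : Finset α) (x : α) : ℕ := #{y ∈ s | y < x}

lemma rankIn_lt_card {s : Finset α} {x : α} (hx : x ∈ s) : rankIn s x < #s :=
  card_lt_card (filter_ssubset.2 ⟨x, hx, lt_irrefl x⟩)

lemma rankIn_lt_rankIn {s : Finset α} {x y : α} (hx : x ∈ s) (hxy : x < y) :
    rankIn s x < rankIn s y := by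
  refine card_lt_card <| (ssubset_iff_of_subset fun z hz => ?_).2 ⟨x, ?_, ?_⟩
  · simp only [mem_filter] at hz ⊢
    exact ⟨hz.1, hz.2.trans hxy⟩
  · simp [hx, hxy]
  · simp

lemma exists_rankIn_eq {s : Finset α} {r : ℕ} (hr : r < #s) : ∃ x ∈ s, rankIn s x = r := by
  have hinj : Set.InjOn (rankIn s) s := fun x hx y hy hxy => by
    by_contra hne
    rcases lt_or_gt_of_ne hne with h | h
    · exact (rankIn_lt_rankIn hx h).ne hxy
    · exact (rankIn_lt_rankIn hy h).ne hxy.symm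
  exact surjOn_of_injOn_of_card_le (t := range #s) _
    (fun x hx => mem_range.2 (rankIn_lt_card hx)) hinj (by simp) (mem_range.2 hr)

lemma le_of_rankIn_lt {s : Finset α} {x b : α} (h : rankIn s x < #{y ∈ s | y ≤ b}) : x ≤ b := by
  by_contra! hbx
  refine h.not_ge (card_le_card fun y hy => ?_)
  simp only [mem_filter] at hy ⊢
  exact ⟨hy.1, hy.2.trans_lt hbx⟩

end Rank

section Cyclic

variable {n : ℕ} [NeZero n]

lemma mem_arc_iff {i j k : Fin n} : k ∈ arc i j ↔ k - i ≤ j - i := by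
  rw [Fin.le_def]
  constructor
  · rintro ⟨h, hh, rfl⟩
    rwa [add_sub_cancel_left, Fin.val_ofNat, Nat.mod_eq_of_lt (hh.trans_lt (j - i).isLt)]
  · intro h
    refine ⟨(k - i : Fin n), h, ?_⟩
    rw [Fin.ofNat_val_eq_self, add_sub_cancel]

lemma rankIn_eq_mod {D : Finset (Fin n)} {d : Fin n} (hd : d ∈ D) (i : Fin n) :
    rankIn D d = (#{e ∈ D | e < i} + rankIn (D.image (· - i)) (d - i)) % #D := by
  have hrot : rankIn (D.image (· - i)) (d - i) = #{e ∈ D | e - i < d - i} := by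
    rw [rankIn, filter_image, card_image_of_injective _ sub_left_injective]
  have hsub : ∀ a : Fin n,
      ((a - i : Fin n) : ℕ) = if i ≤ a then (a : ℕ) - i else n + (a : ℕ) - i := by
    intro a
    split_ifs with h
    · exact Fin.coe_sub_iff_le.2 h
    · exact Fin.coe_sub_iff_lt.2 (not_le.1 h)
  have hcount : #{e ∈ D | e < i} + #{e ∈ D | e - i < d - i} =
      rankIn D d + if d < i then #D else 0 := by
    have hconst : (if d < i then #D else 0) = ∑ _e ∈ D, if d < i then 1 else 0 := by
      split_ifs <;> simp
    rw [rankIn, hconst, card_filter, card_filter, card_filter, ← sum_add_distrib,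
      ← sum_add_distrib]
    refine sum_congr rfl fun e _ => ?_
    simp only [Fin.lt_def, Fin.le_def, hsub]
    split_ifs <;> omega
  rw [hrot, hcount]
  split_ifs <;> simp [Nat.mod_eq_of_lt (rankIn_lt_card hd)]

lemma exists_rankIn_eq_of_arc {D S : Finset (Fin n)} {i j : Fin n} (hSD : S ⊆ D)
    (hS : ∀ d ∈ D, d ∈ S ↔ d ∈ arc i j) {r : ℕ} (hr : r < #S) :
    ∃ d ∈ S, rankIn D d = (#{e ∈ D | e < i} + r) % #D := by
  have hS' : {e ∈ D | e - i ≤ j - i} = S := by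
    ext e
    simp only [mem_filter, ← mem_arc_iff]
    exact ⟨fun h => (hS e h.1).2 h.2, fun h => ⟨hSD h, (hS e (hSD h)).1 h⟩⟩
  have hcard : #{y ∈ D.image (· - i) | y ≤ j - i} = #S := by
    rw [filter_image, card_image_of_injective _ sub_left_injective]
    exact congrArg card hS'
  have hrD : r < #(D.image (· - i)) := by
    rw [card_image_of_injective _ sub_left_injective]
    exact hr.trans_le (card_le_card hSD)
  obtain ⟨e', he', hre'⟩ := exists_rankIn_eq hrD
  obtain ⟨e, heD, rfl⟩ := mem_image.1 he'
  have heS : e ∈ S := hS' ▸ mem_filter.2 ⟨heD, le_of_rankIn_lt (hre' ▸ hcard ▸ hr)⟩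
  exact ⟨e, heS, by rw [rankIn_eq_mod heD i, hre']⟩

end Cyclic

section Coloring

def SplitsCyclicTriples (k : ℕ) (P : ℕ → Prop) : Prop :=
  ∀ a, ∃ s < 3, ∃ s' < 3, P ((a + s) % k) ∧ ¬ P ((a + s') % k)

lemma splitsCyclicTriples_of_forall_lt {k : ℕ} (hk : 0 < k) {P : ℕ → Prop}
    (h : ∀ c < k, ∃ s < 3, ∃ s' < 3, P ((c + s) % k) ∧ ¬ P ((c + s') % k)) :
    SplitsCyclicTriples k P := fun a => by
  simpa only [Nat.mod_add_mod] using h (a % k) (Nat.mod_lt a hk)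

lemma splitsCyclicTriples_even {k : ℕ} (hk : 2 ≤ k) :
    SplitsCyclicTriples k (fun r => r % 2 = 0) := by
  refine splitsCyclicTriples_of_forall_lt (by omega) fun c hc => ?_
  by_cases hc1 : c + 1 < k
  · have h0 : (c + 0) % k = c := Nat.mod_eq_of_lt hc
    have h1 : (c + 1) % k = c + 1 := Nat.mod_eq_of_lt hc1
    by_cases hpar : c % 2 = 0
    · exact ⟨0, by norm_num, 1, by norm_num, by rw [h0, h1]; omega⟩
    · exact ⟨1, by norm_num, 0, by norm_num, by rw [h0, h1]; omega⟩
  · have h1 : (c + 1) % k = 0 := by rw [show c + 1 = k by omega, Nat.mod_self]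
    have h2 : (c + 2) % k = 1 := by rw [show c + 2 = 1 + k by omega, Nat.add_mod_right,
      Nat.mod_eq_of_lt (by omega)]
    exact ⟨1, by norm_num, 2, by norm_num, by rw [h1, h2]; omega⟩

/-- The parity coloring with `0` and `1` exchanged. -/
lemma splitsCyclicTriples_swap {k : ℕ} (hk : 3 ≤ k) :
    SplitsCyclicTriples k (fun r => r % 2 = 0 ↔ 2 ≤ r) := by
  refine splitsCyclicTriples_of_forall_lt (by omega) fun c hc => ?_
  have h0 : (c + 0) % k = c := Nat.mod_eq_of_lt hc
  rcases lt_trichotomy (c + 2) k with hc2 | hc2 | hc2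
  · have h1 : (c + 1) % k = c + 1 := Nat.mod_eq_of_lt (by omega)
    have h2 : (c + 2) % k = c + 2 := Nat.mod_eq_of_lt hc2
    rcases Nat.lt_or_ge c 2 with hc0 | hc0
    · by_cases hc1 : c = 0
      · exact ⟨1, by norm_num, 0, by norm_num, by rw [h0, h1]; omega⟩
      · exact ⟨0, by norm_num, 2, by norm_num, by rw [h0, h2]; omega⟩
    · by_cases hpar : c % 2 = 0
      · exact ⟨0, by norm_num, 1, by norm_num, by rw [h0, h1]; omega⟩
      · exact ⟨1, by norm_num, 0, by norm_num, by rw [h0, h1]; omega⟩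
  · have h1 : (c + 1) % k = c + 1 := Nat.mod_eq_of_lt (by omega)
    have h2 : (c + 2) % k = 0 := by rw [hc2, Nat.mod_self]
    by_cases hpar : c % 2 = 0
    · exact ⟨0, by norm_num, 2, by norm_num, by rw [h0, h2]; omega⟩
    · exact ⟨1, by norm_num, 2, by norm_num, by rw [h1, h2]; omega⟩
  · have h1 : (c + 1) % k = 0 := by rw [show c + 1 = k by omega, Nat.mod_self]
    have h2 : (c + 2) % k = 1 := by rw [show c + 2 = 1 + k by omega, Nat.add_mod_right,
      Nat.mod_eq_of_lt (by omega)]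
    exact ⟨2, by norm_num, 1, by norm_num, by rw [h1, h2]; omega⟩

variable {n : ℕ} [NeZero n]

def SplitsArcTraces (D T : Finset (Fin n)) : Prop :=
  ∀ (S : Finset (Fin n)) (i j : Fin n), S ⊆ D → (∀ d ∈ D, d ∈ S ↔ d ∈ arc i j) → 3 ≤ #S →
    (∃ a ∈ S, a ∈ T) ∧ ∃ b ∈ S, b ∉ T

lemma splitsArcTraces_filter_rankIn {D : Finset (Fin n)} {P : ℕ → Prop} [DecidablePred P]
    (hP : SplitsCyclicTriples #D P) : SplitsArcTraces D {d ∈ D | P (rankIn D d)} := by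
  intro S i j hSD hS hS3
  obtain ⟨s, hs, s', hs', hPs, hPs'⟩ := hP #{e ∈ D | e < i}
  obtain ⟨a, ha, hra⟩ := exists_rankIn_eq_of_arc hSD hS (hs.trans_le hS3)
  obtain ⟨b, hb, hrb⟩ := exists_rankIn_eq_of_arc hSD hS (hs'.trans_le hS3)
  exact ⟨⟨a, ha, mem_filter.2 ⟨hSD ha, hra ▸ hPs⟩⟩,
    ⟨b, hb, fun h => hPs' (hrb ▸ (mem_filter.1 h).2)⟩⟩

/-- Take `T = D` if `#D ≤ 2`; otherwise color `D` by one of the two parity colorings of the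
ranks: the first agrees at ranks `0` and `2`, the second does not, so one of them is neither `w`
nor its complement. -/
lemma exists_splitsArcTraces (D : Finset (Fin n)) (w : Fin n → Prop)
    (hw : ∃ a ∈ D, ∃ b ∈ D, w a ∧ ¬ w b) :
    ∃ T, SplitsArcTraces D T ∧ (∃ d ∈ D, (d ∈ T ↔ w d)) ∧ ∃ d ∈ D, ¬(d ∈ T ↔ w d) := by
  obtain ⟨a, ha, b, hb, hwa, hwb⟩ := hw
  rcases lt_or_ge #D 3 with hk | hk
  · refine ⟨D, fun S _ _ hSD _ _ => absurd (card_le_card hSD) (by omega), ⟨a, ha, ?_⟩,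
      b, hb, ?_⟩ <;> simp [ha, hb, hwa, hwb]
  have hboth : ∀ {T : Finset (Fin n)} {d d' : Fin n}, d ∈ D → d' ∈ D →
      ¬((d ∈ T ↔ w d) ↔ (d' ∈ T ↔ w d')) →
      (∃ d ∈ D, (d ∈ T ↔ w d)) ∧ ∃ d ∈ D, ¬(d ∈ T ↔ w d) := by
    intro T d d' hd hd' h
    by_cases hdT : d ∈ T ↔ w d
    · exact ⟨⟨d, hd, hdT⟩, d', hd', fun h' => h (iff_of_true hdT h')⟩
    · exact ⟨⟨d', hd', by tauto⟩, d, hd, hdT⟩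
  obtain ⟨d₀, hd₀, hr₀⟩ := exists_rankIn_eq (s := D) (r := 0) (by omega)
  obtain ⟨d₂, hd₂, hr₂⟩ := exists_rankIn_eq (s := D) (r := 2) (by omega)
  by_cases hw02 : w d₀ ↔ w d₂
  · refine ⟨_, splitsArcTraces_filter_rankIn (splitsCyclicTriples_swap hk), hboth hd₀ hd₂ ?_⟩
    simp [hd₀, hd₂, hr₀, hr₂, hw02]
  · refine ⟨_, splitsArcTraces_filter_rankIn (splitsCyclicTriples_even (by omega)),
      hboth hd₀ hd₂ ?_⟩
    simpa [hd₀, hd₂, hr₀, hr₂] using hw02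

end Coloring

lemma piecewise_sup_inf_add_compl {ι : Type*} [Fintype ι] [DecidableEq ι] (T : Finset ι)
    (v v' : ι → ℝ) :
    T.piecewise (v ⊔ v') (v ⊓ v') + Tᶜ.piecewise (v ⊔ v') (v ⊓ v') = v + v' := by
  ext j
  by_cases hj : j ∈ T <;> simp [hj, min_add_max, max_add_min]

section Saturation

variable {m n : ℕ} {A : Matrix (Fin m) (Fin n) ℝ} {v v' : Fin n → ℝ}

lemma piecewise_sup_inf_apply_eq_left_iff (hv : IsBinaryVec v) (hv' : IsBinaryVec v')
    {j : Fin n} (hj : v j ≠ v' j) (T : Finset (Fin n)) :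
    T.piecewise (v ⊔ v') (v ⊓ v') j = v j ↔ (j ∈ T ↔ v j = 1) := by
  rcases hv j with h | h <;> rcases hv' j with h' | h' <;> by_cases hjT : j ∈ T <;>
    simp_all

lemma piecewise_sup_inf_apply_eq_right_iff (hv : IsBinaryVec v) (hv' : IsBinaryVec v')
    {j : Fin n} (hj : v j ≠ v' j) (T : Finset (Fin n)) :
    T.piecewise (v ⊔ v') (v ⊓ v') j = v' j ↔ ¬(j ∈ T ↔ v j = 1) := by
  rcases hv j with h | h <;> rcases hv' j with h' | h' <;> by_cases hjT : j ∈ T <;>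
    simp_all

lemma piecewise_sup_inf_mem_integerCovers (hA : IsBinaryMatrix A) (hv : v ∈ integerCovers A)
    (hv' : v' ∈ integerCovers A) (T : Finset (Fin n))
    (hT : ∀ t, (rowSupp A t ∩ supp v ∩ supp v').Nonempty ∨ ∃ j ∈ T, A t j ≠ 0 ∧ v j ≠ v' j) :
    T.piecewise (v ⊔ v') (v ⊓ v') ∈ integerCovers A := by
  have h0 := nonneg_of_forall_eq_natCast hv.1
  have h0' := nonneg_of_forall_eq_natCast hv'.1
  have hnat : ∀ j, ∃ k : ℕ, T.piecewise (v ⊔ v') (v ⊓ v') j = k := fun j => by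
    obtain ⟨a, ha⟩ := hv.1 j
    obtain ⟨b, hb⟩ := hv'.1 j
    by_cases hj : j ∈ T
    · exact ⟨max a b, by simp [hj, ha, hb]⟩
    · exact ⟨min a b, by simp [hj, ha, hb]⟩
  refine (mem_integerCovers_iff hA hnat).2 fun t => ?_
  rcases hT t with ⟨j, ⟨hAj, hvj : v j ≠ 0⟩, hv'j : v' j ≠ 0⟩ | ⟨j, hjT, hAj, hne⟩
  · refine ⟨j, hAj, ne_of_gt ?_⟩
    have hmin : 0 < min (v j) (v' j) :=
      lt_min ((h0 j).lt_of_ne (Ne.symm hvj)) ((h0' j).lt_of_ne (Ne.symm hv'j))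
    by_cases hj : j ∈ T
    · simpa [hj] using hmin.trans_le min_le_max
    · simpa [hj] using hmin
  · refine ⟨j, hAj, ?_⟩
    have hmax : 0 < max (v j) (v' j) := by
      by_contra! h
      exact hne (((max_le_iff.1 h).1.antisymm (h0 j)).trans
        ((max_le_iff.1 h).2.antisymm (h0' j)).symm)
    simpa [hjT, supp] using hmax.ne'

lemma three_le_card_filter_rowSupp {D : Finset (Fin n)} (hD : ∀ j, j ∈ D ↔ v j ≠ v' j)
    {t : Fin m} (hv : (rowSupp A t ∩ supp v).Nonempty) (hv' : (rowSupp A t ∩ supp v').Nonempty)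
    (hcrit : ¬(rowSupp A t ∩ supp v ∩ supp v').Nonempty)
    (hnoedge : ∀ p q, ¬ (JSG A v v').Adj p q) : 3 ≤ #{j ∈ D | A t j ≠ 0} := by
  obtain ⟨p, hpA, hpv : v p ≠ 0⟩ := hv
  obtain ⟨p', hp'A, hp'v : v' p' ≠ 0⟩ := hv'
  have hvzero : ∀ x ∈ rowSupp A t, v' x ≠ 0 → v x = 0 := fun x hx h' =>
    by_contra fun h => hcrit ⟨x, ⟨hx, h⟩, h'⟩
  have hv'zero : ∀ x ∈ rowSupp A t, v x ≠ 0 → v' x = 0 := fun x hx h =>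
    by_contra fun h' => hcrit ⟨x, ⟨hx, h⟩, h'⟩
  have hmem : ∀ x ∈ rowSupp A t, v x ≠ 0 ∨ v' x ≠ 0 → x ∈ ({j ∈ D | A t j ≠ 0} : Finset _) := by
    rintro x hx (h | h)
    · exact mem_filter.2 ⟨(hD x).2 (by rw [hv'zero x hx h]; exact h), hx⟩
    · exact mem_filter.2 ⟨(hD x).2 (by rw [hvzero x hx h]; exact h.symm), hx⟩
  have hpp' : p ≠ p' := fun h => hpv (h ▸ hvzero p' hp'A hp'v)
  by_contra! hcard
  have htrace : ({j ∈ D | A t j ≠ 0} : Finset _) = {p, p'} :=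
    (eq_of_subset_of_card_le (insert_subset (hmem p hpA (.inl hpv))
      (singleton_subset_iff.2 (hmem p' hp'A (.inr hp'v)))) (by rw [card_pair hpp']; omega)).symm
  have hpair : ∀ x ∈ rowSupp A t, v x ≠ 0 ∨ v' x ≠ 0 → x = p ∨ x = p' := fun x hx h => by
    simpa [htrace] using hmem x hx h
  refine hnoedge p p' ⟨hpp', .inl ⟨t, ?_, ?_⟩⟩
  · refine Set.eq_singleton_iff_unique_mem.2 ⟨⟨hpA, hpv⟩, fun x ⟨hx, hvx⟩ => ?_⟩
    exact (hpair x hx (.inl hvx)).resolve_right fun h => hvx (h ▸ hvzero p' hp'A hp'v)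
  · refine Set.eq_singleton_iff_unique_mem.2 ⟨⟨hp'A, hp'v⟩, fun x ⟨hx, hvx⟩ => ?_⟩
    exact (hpair x hx (.inr hvx)).resolve_left fun h => hvx (h ▸ hv'zero p hpA hpv)

variable [NeZero n]

lemma common_or_splits_rowSupp (hA : IsBinaryMatrix A) (hcirc : RowCircular A)
    (hv : v ∈ integerCovers A) (hv' : v' ∈ integerCovers A)
    (hnoedge : ∀ p q, ¬ (JSG A v v').Adj p q) {D T : Finset (Fin n)}
    (hD : ∀ j, j ∈ D ↔ v j ≠ v' j) (hT : SplitsArcTraces D T) (t : Fin m) :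
    (rowSupp A t ∩ supp v ∩ supp v').Nonempty ∨
      (∃ a ∈ T, A t a ≠ 0 ∧ v a ≠ v' a) ∧ ∃ b ∈ Tᶜ, A t b ≠ 0 ∧ v b ≠ v' b := by
  refine or_iff_not_imp_left.2 fun hcrit => ?_
  obtain ⟨i, j, hij⟩ := hcirc t
  have h3 := three_le_card_filter_rowSupp hD ((mem_integerCovers_iff hA hv.1).1 hv t)
    ((mem_integerCovers_iff hA hv'.1).1 hv' t) hcrit hnoedge
  have htrace : ∀ d ∈ D, d ∈ ({j ∈ D | A t j ≠ 0} : Finset _) ↔ d ∈ arc i j := fun d hd => by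
    rw [mem_filter, ← hij]
    exact and_iff_right hd
  obtain ⟨⟨a, ha, haT⟩, b, hb, hbT⟩ := hT _ i j (filter_subset _ _) htrace h3
  rw [mem_filter, hD] at ha hb
  exact ⟨⟨a, haT, ha.2, ha.1⟩, b, mem_compl.2 hbT, hb.2, hb.1⟩

end Saturation

/-- for row circular `A`, if the joint saturation graph has no edges, then
the vertices are not adjacent in `Q*(A)`. -/
theorem stmt10 {m n : ℕ} [NeZero n] (A : Matrix (Fin m) (Fin n) ℝ)
    (hstd : StandardAssumptions A) (hcirc : RowCircular A)
    (v v' : Fin n → ℝ) (hne : v ≠ v')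
    (hv : IsVertex (Qstar A) v) (hv' : IsVertex (Qstar A) v')
    (hnoedge : ∀ p q : Fin n, ¬ (JSG A v v').Adj p q) :
    ¬ AdjacentVerts (Qstar A) v v' := by
  rintro ⟨-, -, -, hface⟩
  have hA := hstd.1
  have hvb := hv.isBinaryVec hA
  have hv'b := hv'.isBinaryVec hA
  have hvI := hv.mem_integerCovers
  have hv'I := hv'.mem_integerCovers
  obtain ⟨j₁, hj₁, hj₁'⟩ := hv.exists_eq_one_eq_zero hA hv' hne
  obtain ⟨j₂, hj₂', hj₂⟩ := hv'.exists_eq_one_eq_zero hA hv hne.symm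
  set D : Finset (Fin n) := {j | v j ≠ v' j}
  have hD : ∀ j, j ∈ D ↔ v j ≠ v' j := fun j => by simp [D]
  have hj₁D : v j₁ ≠ v' j₁ := by simp [hj₁, hj₁']
  obtain ⟨T, hT, ⟨d, hd, hdT⟩, d', hd', hd'T⟩ := exists_splitsArcTraces D (v · = 1)
    ⟨j₁, (hD _).2 hj₁D, j₂, (hD _).2 (by simp [hj₂, hj₂']), hj₁, by simp [hj₂]⟩
  have hrow := common_or_splits_rowSupp hA hcirc hvI hv'I hnoedge hD hT
  have hx := piecewise_sup_inf_mem_integerCovers hA hvI hv'I T fun t => (hrow t).imp_right (·.1)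
  have hy := piecewise_sup_inf_mem_integerCovers hA hvI hv'I Tᶜ fun t => (hrow t).imp_right (·.2)
  have hseg := hface.mem_of_add_eq (integerCovers_subset_Qstar hx) (integerCovers_subset_Qstar hy)
    (piecewise_sup_inf_add_compl T v v')
  have hxv : T.piecewise (v ⊔ v') (v ⊓ v') ≠ v := fun h =>
    hd'T ((piecewise_sup_inf_apply_eq_left_iff hvb hv'b ((hD d').1 hd') T).1 (congrFun h d'))
  have hxv' : T.piecewise (v ⊔ v') (v ⊓ v') ≠ v' := fun h =>
    (piecewise_sup_inf_apply_eq_right_iff hvb hv'b ((hD d).1 hd) T).1 (congrFun h d) hdT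
  exact (eq_or_eq_of_mem_segment hseg hj₁D ((em (j₁ ∈ T ↔ v j₁ = 1)).imp
    (piecewise_sup_inf_apply_eq_left_iff hvb hv'b hj₁D T).2
    (piecewise_sup_inf_apply_eq_right_iff hvb hv'b hj₁D T).2)).elim hxv hxv'
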